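/- arXiv:0805.1034 — 4 statements merged into one kernel-verified Lean document; each statement's English description precedes it below -/
import Mathlib

section
/- Let a1, a2, b1, b3 > 0 and b2 < 0 be real numbers, and let α = (|b2|/(2·b3))·(√(1 + 4·a1·b1·b3/(a2·b2²)) - 1). Then the set of all equilibria (ρs, ρn) of the system ρs' = -a1·ρn·ρs - a2·ρs², ρn' = -b1·ρs - b2·ρn² - b3·ρn³ with ρs ≥ 0 is exactly { (0,0), (0, -b2/b3), (a1·α/a2, -α) }. -/
/-!
A point with `ρs ≠ 0` must satisfy `a1 ρn + a2 ρs = 0`, so the second equation becomes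
`-ρn · (b3 ρn² + b2 ρn - a1 b1 / a2) = 0`, while `ρs = 0` leaves `ρn² (b2 + b3 ρn) = 0`.
Since `ρs ≥ 0` forces `ρn ≤ 0`, the quadratic factor picks out the unique nonnegative
root `α` of `b3 t² - b2 t - a1 b1 / a2`, and the expression defining `α` is the quadratic formula for it.
-/

lemma abs_mul_sqrt_one_add_div_sq {b : ℝ} (hb : b ≠ 0) (d : ℝ) :
    |b| * √(1 + d / b ^ 2) = √(b ^ 2 + d) := by
  rw [← Real.sqrt_sq_eq_abs, ← Real.sqrt_mul (sq_nonneg b), mul_add, mul_one,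
    mul_div_cancel₀ d (pow_ne_zero 2 hb)]

section QuadraticRoot

variable {a b c : ℝ}

lemma quadratic_eq_zero_of_eq_sqrt_discrim (ha : a ≠ 0) (hd : 0 ≤ b ^ 2 + 4 * a * c) {α : ℝ}
    (hα : α = (√(b ^ 2 + 4 * a * c) + b) / (2 * a)) :
    a * α ^ 2 - b * α - c = 0 := by
  have hsq := Real.sq_sqrt hd
  set r := √(b ^ 2 + 4 * a * c)
  subst hα
  field_simp
  linear_combination hsq

lemma pos_of_eq_sqrt_discrim (ha : 0 < a) (hc : 0 < c) {α : ℝ}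
    (hα : α = (√(b ^ 2 + 4 * a * c) + b) / (2 * a)) :
    0 < α := by
  have hlt : |b| < √(b ^ 2 + 4 * a * c) := by
    rw [← Real.sqrt_sq_eq_abs]
    exact Real.sqrt_lt_sqrt (sq_nonneg b) (by nlinarith [mul_pos ha hc])
  rw [hα]
  exact div_pos (by linarith [neg_abs_le b]) (by positivity)

lemma eq_of_quadratic_eq_zero_of_nonneg (ha : 0 < a) (hb : b ≤ 0) {t s : ℝ}
    (ht : a * t ^ 2 - b * t - c = 0) (hs : a * s ^ 2 - b * s - c = 0)
    (ht0 : 0 ≤ t) (hs0 : 0 ≤ s) : t = s := by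
  have hfac : (t - s) * (a * (t + s) - b) = 0 := by linear_combination ht - hs
  rcases mul_eq_zero.1 hfac with h | h
  · linarith
  · have : a * (t + s) = 0 := by nlinarith [mul_nonneg ha.le (add_nonneg ht0 hs0)]
    have : t + s = 0 := (mul_eq_zero.1 this).resolve_left ha.ne'
    linarith

lemma quadratic_root_of_eq_abs_mul_sqrt (ha : 0 < a) (hb : b < 0) (hc : 0 < c) {α : ℝ}
    (hα : α = |b| / (2 * a) * (√(1 + 4 * a * c / b ^ 2) - 1)) :
    0 < α ∧ a * α ^ 2 - b * α - c = 0 := by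
  have hα' : α = (√(b ^ 2 + 4 * a * c) + b) / (2 * a) := by
    rw [hα, ← abs_mul_sqrt_one_add_div_sq hb.ne, abs_of_neg hb]
    field_simp
    ring
  exact ⟨pos_of_eq_sqrt_discrim ha hc hα',
    quadratic_eq_zero_of_eq_sqrt_discrim ha.ne' (by nlinarith [mul_pos ha hc]) hα'⟩

end QuadraticRoot

section Equilibria

variable {a1 a2 b1 b2 b3 α : ℝ}

lemma eq_zero_or_eq_neg_div_of_mul_sq_add_mul_cube_eq_zero (hb3 : b3 ≠ 0) {y : ℝ}
    (h : b2 * y ^ 2 + b3 * y ^ 3 = 0) : y = 0 ∨ y = -b2 / b3 := by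
  have hfac : y ^ 2 * (b2 + b3 * y) = 0 := by linear_combination h
  rcases mul_eq_zero.1 hfac with hy | hy
  · exact Or.inl (pow_eq_zero_iff two_ne_zero |>.1 hy)
  · exact Or.inr (by field_simp; linarith)

lemma equilibrium_cases (ha1 : 0 < a1) (ha2 : 0 < a2) (hb3 : 0 < b3) (hb2 : b2 < 0)
    (hα : 0 < α) (hroot : b3 * α ^ 2 - b2 * α - a1 * b1 / a2 = 0) {x y : ℝ} (hx : 0 ≤ x)
    (h1 : -a1 * y * x - a2 * x ^ 2 = 0) (h2 : -b1 * x - b2 * y ^ 2 - b3 * y ^ 3 = 0) :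
    (x = 0 ∧ y = 0) ∨ (x = 0 ∧ y = -b2 / b3) ∨ (x = a1 * α / a2 ∧ y = -α) := by
  rcases mul_eq_zero.1 (show x * (a1 * y + a2 * x) = 0 by linear_combination -h1) with hx0 | hxy
  · subst hx0
    have hcubic : b2 * y ^ 2 + b3 * y ^ 3 = 0 := by linear_combination -h2
    rcases eq_zero_or_eq_neg_div_of_mul_sq_add_mul_cube_eq_zero hb3.ne' hcubic with hy | hy
    · exact Or.inl ⟨rfl, hy⟩
    · exact Or.inr (Or.inl ⟨rfl, hy⟩)
  have hxdef : x = -(a1 * y) / a2 := by field_simp; linarith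
  have hy : y ≤ 0 := by nlinarith
  have hfac : -y * (b3 * (-y) ^ 2 - b2 * (-y) - a1 * b1 / a2) = 0 := by
    rw [hxdef] at h2
    field_simp at h2 ⊢
    linear_combination h2
  rcases mul_eq_zero.1 hfac with hy0 | hq
  · left
    have hy0 : y = 0 := by linarith
    subst hy0
    simpa using hxdef
  · have hyα : -y = α :=
      eq_of_quadratic_eq_zero_of_nonneg hb3 hb2.le hq hroot (by linarith) hα.le
    right; right
    refine ⟨?_, by linarith⟩
    rw [hxdef, ← hyα]
    ring

lemma equilibrium_of_quadratic_root (ha2 : 0 < a2)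
    (hroot : b3 * α ^ 2 - b2 * α - a1 * b1 / a2 = 0) :
    -b1 * (a1 * α / a2) - b2 * (-α) ^ 2 - b3 * (-α) ^ 3 = 0 := by
  have hroot' : a2 * b3 * α ^ 2 - a2 * b2 * α - a1 * b1 = 0 := by
    field_simp at hroot
    linear_combination hroot
  field_simp
  linear_combination α * hroot'

end Equilibria

/-- the equilibria of the system ρs' = -a1·ρn·ρs - a2·ρs²,
ρn' = -b1·ρs - b2·ρn² - b3·ρn³ with ρs ≥ 0 are exactly
(0,0), (0, -b2/b3) and (a1·α/a2, -α). -/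
theorem equilibria_classification (a1 a2 b1 b2 b3 α : ℝ)
    (ha1 : 0 < a1) (ha2 : 0 < a2) (hb1 : 0 < b1) (hb3 : 0 < b3) (hb2 : b2 < 0)
    (hα : α = (|b2| / (2 * b3)) * (Real.sqrt (1 + 4 * a1 * b1 * b3 / (a2 * b2 ^ 2)) - 1)) :
    {p : ℝ × ℝ | 0 ≤ p.1 ∧
        -a1 * p.2 * p.1 - a2 * p.1 ^ 2 = 0 ∧
        -b1 * p.1 - b2 * p.2 ^ 2 - b3 * p.2 ^ 3 = 0} =
      {((0 : ℝ), (0 : ℝ)), ((0 : ℝ), -b2 / b3), (a1 * α / a2, -α)} := by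
  obtain ⟨hα_pos, hroot⟩ : 0 < α ∧ b3 * α ^ 2 - b2 * α - a1 * b1 / a2 = 0 := by
    refine quadratic_root_of_eq_abs_mul_sqrt hb3 hb2 (by positivity) ?_
    rw [hα]
    congr 3
    field_simp
  ext ⟨x, y⟩
  simp only [Set.mem_ofPred_eq, Set.mem_insert_iff, Set.mem_singleton_iff, Prod.mk.injEq]
  constructor
  · rintro ⟨hx, h1, h2⟩
    exact equilibrium_cases ha1 ha2 hb3 hb2 hα_pos hroot hx h1 h2
  · rintro (⟨rfl, rfl⟩ | ⟨rfl, rfl⟩ | ⟨rfl, rfl⟩)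
    · norm_num
    · refine ⟨le_rfl, by ring, ?_⟩
      field_simp
      ring
    · exact ⟨by positivity, by field_simp; ring, equilibrium_of_quadratic_root ha2 hroot⟩
end

section
/- Let a1, a2, b1, b3 > 0 and b2 < 0 be real numbers, let α = (|b2|/(2·b3))·(√(1 + 4·a1·b1·b3/(a2·b2²)) - 1), and let F(ρs, ρn) = (-a1·ρn·ρs - a2·ρs², -b1·ρs - b2·ρn² - b3·ρn³). Then the Jacobian matrix of F at the equilibrium Z2 = (a1·α/a2, -α) has strictly negative trace and strictly positive determinant; consequently both of its eigenvalues have negative real part. -/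
/-- The Jacobian matrix of a planar map `F : ℝ × ℝ → ℝ × ℝ` at a point `p`,
given as the 2×2 matrix of first partial derivatives. -/
noncomputable def jacobian2 (F : ℝ × ℝ → ℝ × ℝ) (p : ℝ × ℝ) : Matrix (Fin 2) (Fin 2) ℝ :=
  !![deriv (fun s => (F (s, p.2)).1) p.1, deriv (fun s => (F (p.1, s)).1) p.2;
     deriv (fun s => (F (s, p.2)).2) p.1, deriv (fun s => (F (p.1, s)).2) p.2]

/-!
`Z2` is an equilibrium with `ρs > 0 > ρn`. At any such equilibrium the first equation gives
`a1 ρn = -a2 ρs`, which turns the Jacobian into `!![-a2 ρs, -a1 ρs; -b1, -2 b2 ρn - 3 b3 ρn²]`,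
and the second equation then reduces its determinant to `a2 ρs ρn (b2 + 2 b3 ρn)`.
Both signs are then read off from `b2 < 0 ≤ b3`. A real 2×2 matrix with negative trace and
positive determinant has characteristic polynomial `X² - t X + d` with `t < 0 < d`, whose
complex roots have negative real part.
-/

open Matrix Polynomial

lemma Complex.re_neg_of_sq_sub_mul_add_eq_zero {t d : ℝ} (ht : t < 0) (hd : 0 < d) {z : ℂ}
    (hz : z ^ 2 - t * z + d = 0) : z.re < 0 := by
  have hre := congrArg Complex.re hz
  have him := congrArg Complex.im hz
  simp only [pow_two, sub_re, add_re, mul_re, ofReal_re, ofReal_im, sub_im, add_im, mul_im,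
    zero_re, zero_im] at hre him
  rcases eq_or_ne z.im 0 with hreal | hnonreal
  · by_contra! hx
    rw [hreal] at hre
    nlinarith [mul_nonneg hx hx]
  · have : z.im * (2 * z.re - t) = 0 := by linear_combination him
    linarith [(mul_eq_zero.1 this).resolve_left hnonreal]

lemma Matrix.re_neg_of_mem_spectrum_of_trace_neg_of_det_pos
    {M : Matrix (Fin 2) (Fin 2) ℝ} (ht : M.trace < 0) (hd : 0 < M.det) :
    ∀ μ ∈ spectrum ℂ (M.map (fun x : ℝ => (x : ℂ))), μ.re < 0 := by
  intro μ hμ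
  rw [mem_spectrum_iff_isRoot_charpoly, charpoly_fin_two, IsRoot.def] at hμ
  have htrace : (M.map (fun x : ℝ => (x : ℂ))).trace = M.trace := by simp [trace_fin_two]
  have hdet : (M.map (fun x : ℝ => (x : ℂ))).det = M.det := by simp [det_fin_two]
  exact Complex.re_neg_of_sq_sub_mul_add_eq_zero ht hd (by simpa [htrace, hdet] using hμ)

/-- The positive root of `a x² + b x = c` when `a, b, c > 0`. -/
noncomputable def quadPosRoot (a b c : ℝ) : ℝ := b / (2 * a) * (√(1 + 4 * a * c / b ^ 2) - 1)

lemma quadPosRoot_pos {a b c : ℝ} (ha : 0 < a) (hb : 0 < b) (hc : 0 < c) :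
    0 < quadPosRoot a b c := by
  have : 1 < √(1 + 4 * a * c / b ^ 2) :=
    Real.lt_sqrt_of_sq_lt (by nlinarith [show 0 < 4 * a * c / b ^ 2 by positivity])
  exact mul_pos (by positivity) (by linarith)

lemma quadPosRoot_spec {a b c : ℝ} (ha : 0 < a) (hb : 0 < b) (hc : 0 ≤ c) :
    a * quadPosRoot a b c ^ 2 + b * quadPosRoot a b c = c := by
  obtain ⟨s, hs⟩ : ∃ s, s = √(1 + 4 * a * c / b ^ 2) := ⟨_, rfl⟩
  have hs2 : s ^ 2 - 1 = 4 * a * c / b ^ 2 := by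
    rw [hs, Real.sq_sqrt (by positivity)]; ring
  calc a * quadPosRoot a b c ^ 2 + b * quadPosRoot a b c = b ^ 2 / (4 * a) * (s ^ 2 - 1) := by
        rw [quadPosRoot, ← hs]; field_simp; ring
    _ = c := by rw [hs2]; field_simp

section TwoFluid

variable (a1 a2 b1 b2 b3 : ℝ)

/-- The right-hand side of system (8.220), at `p = (ρs, ρn)`. -/
def twoFluidField (p : ℝ × ℝ) : ℝ × ℝ :=
  (-a1 * p.2 * p.1 - a2 * p.1 ^ 2, -b1 * p.1 - b2 * p.2 ^ 2 - b3 * p.2 ^ 3)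

lemma jacobian2_twoFluidField (x y : ℝ) :
    jacobian2 (twoFluidField a1 a2 b1 b2 b3) (x, y) =
      !![-a1 * y - 2 * a2 * x, -a1 * x; -b1, -2 * b2 * y - 3 * b3 * y ^ 2] := by
  have h00 : HasDerivAt (fun s => -a1 * y * s - a2 * s ^ 2) (-a1 * y - 2 * a2 * x) x :=
    (((hasDerivAt_id x).const_mul _).sub ((hasDerivAt_pow 2 x).const_mul a2)).congr_deriv
      (by simp; ring)
  have h01 : HasDerivAt (fun s => -a1 * s * x - a2 * x ^ 2) (-a1 * x) y :=
    ((((hasDerivAt_id y).const_mul (-a1)).mul_const x).sub_const _).congr_deriv (by simp)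
  have h10 : HasDerivAt (fun s => -b1 * s - b2 * y ^ 2 - b3 * y ^ 3) (-b1) x :=
    ((((hasDerivAt_id x).const_mul (-b1)).sub_const _).sub_const _).congr_deriv (by simp)
  have h11 : HasDerivAt (fun s => -b1 * x - b2 * s ^ 2 - b3 * s ^ 3)
      (-2 * b2 * y - 3 * b3 * y ^ 2) y :=
    ((((hasDerivAt_pow 2 y).const_mul b2).const_sub _).sub
      ((hasDerivAt_pow 3 y).const_mul b3)).congr_deriv (by ring)
  simp only [jacobian2, twoFluidField]
  rw [h00.deriv, h01.deriv, h10.deriv, h11.deriv]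

variable {a1 a2 b1 b2 b3}

lemma twoFluidField_eq_zero_iff {x y : ℝ} (hx : x ≠ 0) :
    twoFluidField a1 a2 b1 b2 b3 (x, y) = 0 ↔
      a1 * y + a2 * x = 0 ∧ b1 * x + b2 * y ^ 2 + b3 * y ^ 3 = 0 := by
  simp only [twoFluidField, Prod.mk_eq_zero]
  refine and_congr ⟨fun h => ?_, fun h => by linear_combination -x * h⟩
    ⟨fun h => by linear_combination -h, fun h => by linear_combination -h⟩
  exact (mul_eq_zero.1 (by linear_combination -h : x * (a1 * y + a2 * x) = 0)).resolve_left hx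

lemma twoFluidField_div_neg_eq_zero {α : ℝ} (ha2 : a2 ≠ 0)
    (hα : b3 * α ^ 2 - b2 * α = a1 * b1 / a2) :
    twoFluidField a1 a2 b1 b2 b3 (a1 * α / a2, -α) = 0 := by
  simp only [twoFluidField, Prod.mk_eq_zero]
  constructor
  · field_simp; ring
  · field_simp at hα ⊢
    linear_combination α * hα

variable {x y : ℝ} (hxy : twoFluidField a1 a2 b1 b2 b3 (x, y) = 0) (hx : 0 < x) (hy : y < 0)
include hxy hx hy

lemma trace_jacobian2_twoFluidField_neg (ha2 : 0 < a2) (hb2 : b2 < 0) (hb3 : 0 ≤ b3) :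
    (jacobian2 (twoFluidField a1 a2 b1 b2 b3) (x, y)).trace < 0 := by
  obtain ⟨h1, -⟩ := (twoFluidField_eq_zero_iff hx.ne').1 hxy
  rw [jacobian2_twoFluidField, trace_fin_two_of]
  nlinarith [mul_pos_of_neg_of_neg hb2 hy, mul_nonneg hb3 (sq_nonneg y)]

lemma det_jacobian2_twoFluidField_pos (ha2 : 0 < a2) (hb2 : b2 < 0) (hb3 : 0 ≤ b3) :
    0 < (jacobian2 (twoFluidField a1 a2 b1 b2 b3) (x, y)).det := by
  obtain ⟨h1, h2⟩ := (twoFluidField_eq_zero_iff hx.ne').1 hxy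
  rw [jacobian2_twoFluidField, det_fin_two_of]
  have hdet : (-a1 * y - 2 * a2 * x) * (-2 * b2 * y - 3 * b3 * y ^ 2) - -a1 * x * -b1
      = a2 * x * -y * -(b2 + 2 * b3 * y) := by
    linear_combination (3 * b2 * y + 4 * b3 * y ^ 2) * h1 - a1 * h2
  rw [hdet]
  have hlin : b2 + 2 * b3 * y < 0 := by nlinarith
  exact mul_pos (mul_pos (mul_pos ha2 hx) (neg_pos.2 hy)) (neg_pos.2 hlin)

end TwoFluid

/-- the Jacobian of F at Z2 = (a1·α/a2, -α) has negative trace and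
positive determinant; consequently both of its (complex) eigenvalues have
negative real part. -/
theorem jacobian_at_Z2 (a1 a2 b1 b2 b3 α : ℝ)
    (ha1 : 0 < a1) (ha2 : 0 < a2) (hb1 : 0 < b1) (hb3 : 0 < b3) (hb2 : b2 < 0)
    (hα : α = (|b2| / (2 * b3)) * (Real.sqrt (1 + 4 * a1 * b1 * b3 / (a2 * b2 ^ 2)) - 1))
    (F : ℝ × ℝ → ℝ × ℝ)
    (hF : F = fun p => (-a1 * p.2 * p.1 - a2 * p.1 ^ 2,
                        -b1 * p.1 - b2 * p.2 ^ 2 - b3 * p.2 ^ 3)) :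
    (jacobian2 F (a1 * α / a2, -α)).trace < 0 ∧
    0 < (jacobian2 F (a1 * α / a2, -α)).det ∧
    ∀ μ ∈ spectrum ℂ ((jacobian2 F (a1 * α / a2, -α)).map (fun x : ℝ => (x : ℂ))),
      μ.re < 0 := by
  obtain rfl : F = twoFluidField a1 a2 b1 b2 b3 := hF
  have hroot : α = quadPosRoot b3 |b2| (a1 * b1 / a2) := by
    rw [hα, quadPosRoot, sq_abs]; ring_nf
  have hb2' : 0 < |b2| := abs_pos.2 hb2.ne
  have hc : 0 < a1 * b1 / a2 := by positivity
  have hαpos : 0 < α := hroot ▸ quadPosRoot_pos hb3 hb2' hc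
  have hαeq : b3 * α ^ 2 - b2 * α = a1 * b1 / a2 := by
    have := hroot ▸ quadPosRoot_spec hb3 hb2' hc.le
    rwa [abs_of_neg hb2, neg_mul, ← sub_eq_add_neg] at this
  have heq := twoFluidField_div_neg_eq_zero ha2.ne' hαeq
  have hZ2 : 0 < a1 * α / a2 := by positivity
  have htrace := trace_jacobian2_twoFluidField_neg heq hZ2 (neg_neg_of_pos hαpos) ha2 hb2 hb3.le
  have hdet := det_jacobian2_twoFluidField_pos heq hZ2 (neg_neg_of_pos hαpos) ha2 hb2 hb3.le
  exact ⟨htrace, hdet, re_neg_of_mem_spectrum_of_trace_neg_of_det_pos htrace hdet⟩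
end

section
/- Let a1, a2, b1, b3 > 0, b2 < 0, λ1 ∈ ℝ and λ2 > 0 be real numbers, and set ρ⁺ = (-b2 + √(b2² + 4·b3·λ2))/(2·b3). Then ρ⁺ > 0, the point (0, ρ⁺) is an equilibrium of the system ρs' = λ1·ρs - a1·ρn·ρs - a2·ρs², ρn' = λ2·ρn - b1·ρs - b2·ρn² - b3·ρn³, and the Jacobian matrix of the right-hand side at (0, ρ⁺) is lower triangular with diagonal entries λ1 - a1·ρ⁺ and b2·ρ⁺ - 2·λ2; the entry b2·ρ⁺ - 2·λ2 is strictly negative, and if in addition λ1 < a1·ρ⁺ then both diagonal entries, and hence both eigenvalues of the Jacobian, are strictly negative. -/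
theorem quadratic_root_pos_of_pos {a c ρ : ℝ} (b : ℝ) (ha : 0 < a) (hc : 0 < c)
    (hρ : ρ = (-b + Real.sqrt (b ^ 2 + 4 * a * c)) / (2 * a)) :
    0 < ρ ∧ a * ρ ^ 2 + b * ρ = c := by
  have hd : 0 ≤ b ^ 2 + 4 * a * c := by positivity
  have hroot : a * (ρ * ρ) + b * ρ + -c = 0 := by
    refine (quadratic_eq_zero_iff ha.ne' ?_ ρ).2 (Or.inl hρ)
    rw [discrim, Real.mul_self_sqrt hd]; ring
  refine ⟨hρ ▸ div_pos ?_ (by positivity), by linear_combination hroot⟩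
  have : |b| < Real.sqrt (b ^ 2 + 4 * a * c) := by
    rw [← Real.sqrt_sq_eq_abs]; exact Real.sqrt_lt_sqrt (sq_nonneg b) (by nlinarith)
  linarith [le_abs_self b]

theorem spectrum_lowerTriangular_fin_two_subset {K : Type*} [Field K] (x y z : K) :
    spectrum K !![x, 0; y, z] ⊆ {x, z} := by
  intro μ hμ
  rw [spectrum.mem_iff, Matrix.isUnit_iff_isUnit_det, isUnit_iff_ne_zero, not_not] at hμ
  have hdet : (algebraMap K (Matrix (Fin 2) (Fin 2) K) μ - !![x, 0; y, z]).det
      = (μ - x) * (μ - z) := by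
    simp [Matrix.algebraMap_eq_diagonal, Matrix.det_fin_two]
  rwa [hdet, mul_eq_zero, sub_eq_zero, sub_eq_zero] at hμ

theorem jacobian2_eq_of_hasDerivAt {F : ℝ × ℝ → ℝ × ℝ} {p : ℝ × ℝ} {a b c d : ℝ}
    (ha : HasDerivAt (fun s => (F (s, p.2)).1) a p.1)
    (hb : HasDerivAt (fun s => (F (p.1, s)).1) b p.2)
    (hc : HasDerivAt (fun s => (F (s, p.2)).2) c p.1)
    (hd : HasDerivAt (fun s => (F (p.1, s)).2) d p.2) :
    jacobian2 F p = !![a, b; c, d] := by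
  rw [jacobian2, ha.deriv, hb.deriv, hc.deriv, hd.deriv]

theorem jacobian2_solid_superfluid (l1 l2 a1 a2 b1 b2 b3 : ℝ) (p : ℝ × ℝ) :
    jacobian2 (fun p => (l1 * p.1 - a1 * p.2 * p.1 - a2 * p.1 ^ 2,
        l2 * p.2 - b1 * p.1 - b2 * p.2 ^ 2 - b3 * p.2 ^ 3)) p =
      !![l1 - a1 * p.2 - 2 * a2 * p.1, -a1 * p.1;
         -b1, l2 - 2 * b2 * p.2 - 3 * b3 * p.2 ^ 2] := by
  obtain ⟨x, y⟩ := p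
  have hx := hasDerivAt_id' x
  have hy := hasDerivAt_id' y
  apply jacobian2_eq_of_hasDerivAt
  · refine ((hx.const_mul l1).fun_sub (hx.const_mul (a1 * y))).fun_sub
      ((hx.fun_pow 2).const_mul a2) |>.congr_deriv ?_
    push_cast; ring
  · refine ((hasDerivAt_const y (l1 * x)).fun_sub ((hy.const_mul a1).mul_const x)).fun_sub
      (hasDerivAt_const y (a2 * x ^ 2)) |>.congr_deriv ?_
    ring
  · refine (((hasDerivAt_const x (l2 * y)).fun_sub (hx.const_mul b1)).fun_sub
      (hasDerivAt_const x (b2 * y ^ 2))).fun_sub (hasDerivAt_const x (b3 * y ^ 3))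
      |>.congr_deriv ?_
    ring
  · refine (((hy.const_mul l2).fun_sub (hasDerivAt_const y (b1 * x))).fun_sub
      ((hy.fun_pow 2).const_mul b2)).fun_sub ((hy.fun_pow 3).const_mul b3) |>.congr_deriv ?_
    push_cast; ring

theorem solid_state_equilibrium_general (a1 a2 b1 b2 b3 l1 l2 ρplus : ℝ)
    (hb3 : 0 < b3)
    (hl2 : 0 < l2)
    (hρ : ρplus = (-b2 + Real.sqrt (b2 ^ 2 + 4 * b3 * l2)) / (2 * b3))
    (F : ℝ × ℝ → ℝ × ℝ)
    (hF : F = fun p => (l1 * p.1 - a1 * p.2 * p.1 - a2 * p.1 ^ 2,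
                        l2 * p.2 - b1 * p.1 - b2 * p.2 ^ 2 - b3 * p.2 ^ 3)) :
    0 < ρplus ∧
    F (0, ρplus) = (0, 0) ∧
    jacobian2 F (0, ρplus) = !![l1 - a1 * ρplus, 0; -b1, b2 * ρplus - 2 * l2] ∧
    b2 * ρplus - 2 * l2 < 0 ∧
    (l1 < a1 * ρplus →
      l1 - a1 * ρplus < 0 ∧ b2 * ρplus - 2 * l2 < 0 ∧
      ∀ μ ∈ spectrum ℝ (jacobian2 F (0, ρplus)), μ < 0) := by
  obtain ⟨hρpos, hroot⟩ := quadratic_root_pos_of_pos b2 hb3 hl2 hρ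
  have hdiag : l2 - 2 * b2 * ρplus - 3 * b3 * ρplus ^ 2 = b2 * ρplus - 2 * l2 := by
    linear_combination (-3) * hroot
  have hjac : jacobian2 F (0, ρplus) = !![l1 - a1 * ρplus, 0; -b1, b2 * ρplus - 2 * l2] := by
    rw [hF, jacobian2_solid_superfluid, ← hdiag]
    simp
  have hdiag_neg : b2 * ρplus - 2 * l2 < 0 := by nlinarith
  refine ⟨hρpos, ?_, hjac, hdiag_neg, fun hl1 => ⟨by linarith, hdiag_neg, fun μ hμ => ?_⟩⟩
  · rw [hF, Prod.mk.injEq]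
    exact ⟨by ring, by linear_combination -ρplus * hroot⟩
  · rw [hjac] at hμ
    rcases spectrum_lowerTriangular_fin_two_subset _ _ _ hμ with rfl | rfl <;> linarith

/-- for λ2 > 0, ρ⁺ = (-b2 + √(b2² + 4b3λ2))/(2b3) is positive, (0, ρ⁺) is an
equilibrium of the system (8.207), the Jacobian there is lower triangular with diagonal
entries λ1 - a1·ρ⁺ and b2·ρ⁺ - 2·λ2; the latter is negative, and if λ1 < a1·ρ⁺ then both
diagonal entries, hence all eigenvalues of the Jacobian, are negative. -/
theorem solid_state_equilibrium (a1 a2 b1 b2 b3 l1 l2 ρplus : ℝ)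
    (ha1 : 0 < a1) (ha2 : 0 < a2) (hb1 : 0 < b1) (hb3 : 0 < b3) (hb2 : b2 < 0)
    (hl2 : 0 < l2)
    (hρ : ρplus = (-b2 + Real.sqrt (b2 ^ 2 + 4 * b3 * l2)) / (2 * b3))
    (F : ℝ × ℝ → ℝ × ℝ)
    (hF : F = fun p => (l1 * p.1 - a1 * p.2 * p.1 - a2 * p.1 ^ 2,
                        l2 * p.2 - b1 * p.1 - b2 * p.2 ^ 2 - b3 * p.2 ^ 3)) :
    0 < ρplus ∧
    F (0, ρplus) = (0, 0) ∧
    jacobian2 F (0, ρplus) = !![l1 - a1 * ρplus, 0; -b1, b2 * ρplus - 2 * l2] ∧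
    b2 * ρplus - 2 * l2 < 0 ∧
    (l1 < a1 * ρplus →
      l1 - a1 * ρplus < 0 ∧ b2 * ρplus - 2 * l2 < 0 ∧
      ∀ μ ∈ spectrum ℝ (jacobian2 F (0, ρplus)), μ < 0) :=
  solid_state_equilibrium_general a1 a2 b1 b2 b3 l1 l2 ρplus hb3 hl2 hρ F hF
end

section
/- Let a1, a2, b1, b3 > 0 and b2 < 0 be real numbers, let α = (|b2|/(2·b3))·(√(1 + 4·a1·b1·b3/(a2·b2²)) - 1), and let Z1 = (0, -b2/b3), Z2 = (a1·α/a2, -α). Consider the parametrized map G((λ1, λ2), (ρs, ρn)) = (λ1·ρs - a1·ρn·ρs - a2·ρs², λ2·ρn - b1·ρs - b2·ρn² - b3·ρn³). Then for each i ∈ {1, 2} there exist ε > 0 and a continuous map ζᵢ : {(λ1, λ2) ∈ ℝ² : |λ1| < ε, |λ2| < ε} → ℝ² such that ζᵢ(0, 0) = Zᵢ, G((λ1, λ2), ζᵢ(λ1, λ2)) = 0 for all such (λ1, λ2), and the Jacobian of G((λ1, λ2), ·) at ζᵢ(λ1, λ2) has negative trace and positive determinant (so both eigenvalues have negative real part).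 -/
open Filter Topology Function

theorem jacobian2_eq_toMatrix_fderiv {F : ℝ × ℝ → ℝ × ℝ} {p : ℝ × ℝ}
    (hF : DifferentiableAt ℝ F p) :
    jacobian2 F p = LinearMap.toMatrix (Module.Basis.finTwoProd ℝ) (Module.Basis.finTwoProd ℝ)
      (fderiv ℝ F p) := by
  have h₁ : HasDerivAt (fun s => F (s, p.2)) (fderiv ℝ F p (1, 0)) p.1 :=
    hF.hasFDerivAt.comp_hasDerivAt p.1 ((hasDerivAt_id p.1).prodMk (hasDerivAt_const p.1 p.2))
  have h₂ : HasDerivAt (fun s => F (p.1, s)) (fderiv ℝ F p (0, 1)) p.2 :=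
    hF.hasFDerivAt.comp_hasDerivAt p.2 ((hasDerivAt_const p.2 p.1).prodMk (hasDerivAt_id p.2))
  ext i j
  fin_cases i <;> fin_cases j <;> simp [jacobian2, LinearMap.toMatrix_apply]
  exacts [(hasFDerivAt_fst.comp_hasDerivAt _ h₁).deriv,
    (hasFDerivAt_fst.comp_hasDerivAt _ h₂).deriv, (hasFDerivAt_snd.comp_hasDerivAt _ h₁).deriv,
    (hasFDerivAt_snd.comp_hasDerivAt _ h₂).deriv]

theorem hasFDerivAt_of_differentiableAt_uncurry {𝕜 E F H : Type*} [NontriviallyNormedField 𝕜]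
    [NormedAddCommGroup E] [NormedSpace 𝕜 E] [NormedAddCommGroup F] [NormedSpace 𝕜 F]
    [NormedAddCommGroup H] [NormedSpace 𝕜 H] {G : E → F → H} {q : E} {p : F}
    (hG : DifferentiableAt 𝕜 (uncurry G) (q, p)) :
    HasFDerivAt (G q) (fderiv 𝕜 (uncurry G) (q, p) ∘L .inr 𝕜 E F) p :=
  hG.hasFDerivAt.comp p (hasFDerivAt_prodMk_right q p)

theorem ContinuousLinearMap.isInvertible_of_det_ne_zero {𝕜 E : Type*} [NontriviallyNormedField 𝕜]
    [CompleteSpace 𝕜] [NormedAddCommGroup E] [NormedSpace 𝕜 E] [FiniteDimensional 𝕜 E]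
    {f : E →L[𝕜] E} (hf : f.det ≠ 0) : f.IsInvertible := by
  have hbij : Bijective f :=
    (Module.End.isUnit_iff _).1 ((LinearMap.isUnit_iff_isUnit_det _).2 (isUnit_iff_ne_zero.2 hf))
  exact ⟨(LinearEquiv.ofBijective (f : E →ₗ[𝕜] E) hbij).toContinuousLinearEquiv, rfl⟩

theorem Matrix.isOpen_setOf_trace_neg_and_det_pos {n : Type*} [Fintype n] [DecidableEq n] :
    IsOpen {M : Matrix n n ℝ | M.trace < 0 ∧ 0 < M.det} :=
  (isOpen_lt continuous_id.matrix_trace continuous_const).inter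
    (isOpen_lt continuous_const continuous_id.matrix_det)

theorem Filter.Eventually.exists_pos_forall_abs_lt {P : ℝ × ℝ → Prop}
    (h : ∀ᶠ q in 𝓝 (0 : ℝ × ℝ), P q) :
    ∃ ε > (0 : ℝ), ∀ q : ℝ × ℝ, |q.1| < ε → |q.2| < ε → P q := by
  obtain ⟨ε, hε, hP⟩ := Metric.eventually_nhds_iff.1 h
  refine ⟨ε, hε, fun q h₁ h₂ => hP ?_⟩
  simpa [Prod.norm_def] using max_lt h₁ h₂

def IsStableEquilibrium (F : ℝ × ℝ → ℝ × ℝ) (p : ℝ × ℝ) : Prop :=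
  F p = 0 ∧ (jacobian2 F p).trace < 0 ∧ 0 < (jacobian2 F p).det

section Branch

variable {E : Type*} [NormedAddCommGroup E] [NormedSpace ℝ E] {G : E → ℝ × ℝ → ℝ × ℝ}

theorem continuous_jacobian2_of_contDiff (hG : ContDiff ℝ 1 (uncurry G)) :
    Continuous fun x : E × (ℝ × ℝ) => jacobian2 (G x.1) x.2 := by
  set b := Module.Basis.finTwoProd ℝ
  let toMatrix : ((ℝ × ℝ) →L[ℝ] ℝ × ℝ) →ₗ[ℝ] Matrix (Fin 2) (Fin 2) ℝ :=
    (LinearMap.toMatrix b b).toLinearMap ∘ₗ ContinuousLinearMap.coeLM ℝ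
  have hd := hG.differentiable one_ne_zero
  have h : (fun x : E × (ℝ × ℝ) => jacobian2 (G x.1) x.2) =
      fun x => toMatrix (fderiv ℝ (uncurry G) x ∘L .inr ℝ E (ℝ × ℝ)) := by
    funext x
    have hx := hasFDerivAt_of_differentiableAt_uncurry (hd x)
    rw [jacobian2_eq_toMatrix_fderiv hx.differentiableAt, hx.fderiv]
    rfl
  rw [h]
  exact toMatrix.continuous_of_finiteDimensional.comp
    ((hG.continuous_fderiv one_ne_zero).clm_comp continuous_const)

theorem IsStableEquilibrium.exists_branch [CompleteSpace E] (hG : ContDiff ℝ 1 (uncurry G))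
    {q₀ : E} {Z : ℝ × ℝ} (hZ : IsStableEquilibrium (G q₀) Z) :
    ∃ ζ : E → ℝ × ℝ, ζ q₀ = Z ∧
      ∀ᶠ q in 𝓝 q₀, ContinuousAt ζ q ∧ IsStableEquilibrium (G q) (ζ q) := by
  obtain ⟨hZ₀, htr, hdet⟩ := hZ
  have hD := hasFDerivAt_of_differentiableAt_uncurry (hG.differentiable one_ne_zero (q₀, Z))
  have hinv : (fderiv ℝ (uncurry G) (q₀, Z) ∘L .inr ℝ E (ℝ × ℝ)).IsInvertible := by
    refine ContinuousLinearMap.isInvertible_of_det_ne_zero ?_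
    rw [jacobian2_eq_toMatrix_fderiv hD.differentiableAt, LinearMap.det_toMatrix, hD.fderiv] at hdet
    exact hdet.ne'
  have cdf : ContDiffAt ℝ 1 (uncurry G) (q₀, Z) := hG.contDiffAt
  set ζ := cdf.implicitFunction one_ne_zero hinv
  have hζ₀ : ζ q₀ = Z := cdf.implicitFunction_apply_self one_ne_zero hinv
  have hcont : ∀ᶠ q in 𝓝 q₀, ContinuousAt ζ q :=
    ((cdf.contDiffAt_implicitFunction one_ne_zero hinv).eventually (by simp)).mono
      fun _ h => h.continuousAt
  have hlim : Tendsto (fun q => (q, ζ q)) (𝓝 q₀) (𝓝 (q₀, Z)) :=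
    tendsto_id.prodMk_nhds (hζ₀ ▸ hcont.self_of_nhds.tendsto)
  have hjac : ∀ᶠ q in 𝓝 q₀,
      jacobian2 (G q) (ζ q) ∈ {M : Matrix (Fin 2) (Fin 2) ℝ | M.trace < 0 ∧ 0 < M.det} :=
    hlim.eventually <| (continuous_jacobian2_of_contDiff hG).continuousAt.eventually_mem <|
      Matrix.isOpen_setOf_trace_neg_and_det_pos.mem_nhds ⟨htr, hdet⟩
  refine ⟨ζ, hζ₀, ?_⟩
  filter_upwards [hcont, cdf.eventually_apply_implicitFunction one_ne_zero hinv, hjac]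
    with q hc hq hJ
  exact ⟨hc, hq.trans hZ₀, hJ⟩

end Branch

theorem IsStableEquilibrium.exists_branch_on_square {G : ℝ × ℝ → ℝ × ℝ → ℝ × ℝ}
    (hG : ContDiff ℝ 1 (uncurry G)) {Z : ℝ × ℝ} (hZ : IsStableEquilibrium (G 0) Z) :
    ∃ ε > (0 : ℝ), ∃ ζ : ℝ × ℝ → ℝ × ℝ,
      ContinuousOn ζ {q : ℝ × ℝ | |q.1| < ε ∧ |q.2| < ε} ∧ ζ 0 = Z ∧
      ∀ q : ℝ × ℝ, |q.1| < ε → |q.2| < ε → IsStableEquilibrium (G q) (ζ q) := by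
  obtain ⟨ζ, hζ₀, hζ⟩ := hZ.exists_branch hG
  obtain ⟨ε, hε, h⟩ := hζ.exists_pos_forall_abs_lt
  exact ⟨ε, hε, ζ, fun q hq => (h q hq.1 hq.2).1.continuousWithinAt, hζ₀,
    fun q h₁ h₂ => (h q h₁ h₂).2⟩

section Helium

variable (a1 a2 b1 b2 b3 : ℝ)

/-- The right-hand side of system (8.207), with parameters `q = (λ1, λ2)` and state
`p = (ρs, ρn)`. -/
def heliumField (q p : ℝ × ℝ) : ℝ × ℝ :=
  (q.1 * p.1 - a1 * p.2 * p.1 - a2 * p.1 ^ 2, q.2 * p.2 - b1 * p.1 - b2 * p.2 ^ 2 - b3 * p.2 ^ 3)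

theorem contDiff_heliumField : ContDiff ℝ 1 (uncurry (heliumField a1 a2 b1 b2 b3)) := by
  unfold heliumField
  fun_prop

theorem jacobian2_heliumField (q p : ℝ × ℝ) :
    jacobian2 (heliumField a1 a2 b1 b2 b3 q) p =
      !![q.1 - a1 * p.2 - 2 * a2 * p.1, -(a1 * p.1);
         -b1, q.2 - 2 * b2 * p.2 - 3 * b3 * p.2 ^ 2] := by
  simp (disch := fun_prop) [jacobian2, heliumField]
  constructor <;> ring

variable {a1 a2 b1 b2 b3}

theorem isStableEquilibrium_heliumField_solid (ha1 : 0 < a1) (hb3 : 0 < b3) (hb2 : b2 < 0) :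
    IsStableEquilibrium (heliumField a1 a2 b1 b2 b3 0) (0, -b2 / b3) := by
  simp only [IsStableEquilibrium, jacobian2_heliumField, Matrix.trace_fin_two_of,
    Matrix.det_fin_two_of, Prod.fst_zero, Prod.snd_zero]
  refine ⟨?_, ?_, ?_⟩
  · simp only [heliumField, Prod.ext_iff, Prod.fst_zero, Prod.snd_zero]
    constructor <;> field_simp <;> ring
  · have : (a1 * b2 - b2 ^ 2) / b3 < 0 := div_neg_of_neg_of_pos (by nlinarith) hb3
    convert this using 1
    field_simp
    ring
  · have : 0 < a1 * (-b2) ^ 3 / b3 ^ 2 := by have := neg_pos.2 hb2; positivity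
    convert this using 1
    field_simp
    ring

theorem pos_root_of_eq_sqrt {α : ℝ} (ha1 : 0 < a1) (ha2 : 0 < a2) (hb1 : 0 < b1)
    (hb3 : 0 < b3) (hb2 : b2 < 0)
    (hα : α = (|b2| / (2 * b3)) * (Real.sqrt (1 + 4 * a1 * b1 * b3 / (a2 * b2 ^ 2)) - 1)) :
    0 < α ∧ a2 * (b3 * α ^ 2 - b2 * α) = a1 * b1 := by
  have hb2' : b2 ≠ 0 := hb2.ne
  have hd : 0 < 4 * a1 * b1 * b3 / (a2 * b2 ^ 2) := by positivity
  set s := Real.sqrt (1 + 4 * a1 * b1 * b3 / (a2 * b2 ^ 2))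
  have hs : s ^ 2 = 1 + 4 * a1 * b1 * b3 / (a2 * b2 ^ 2) := Real.sq_sqrt (by positivity)
  have hs₁ : 0 < s - 1 := sub_pos.2 (Real.lt_sqrt_of_sq_lt (by linarith))
  rw [abs_of_neg hb2] at hα
  subst hα
  refine ⟨by have := neg_pos.2 hb2; positivity, ?_⟩
  field_simp at hs ⊢
  linear_combination hs

theorem isStableEquilibrium_heliumField_superfluid {α : ℝ} (ha1 : 0 < a1) (ha2 : 0 < a2)
    (hb3 : 0 < b3) (hb2 : b2 < 0) (hα : 0 < α) (hαroot : a2 * (b3 * α ^ 2 - b2 * α) = a1 * b1) :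
    IsStableEquilibrium (heliumField a1 a2 b1 b2 b3 0) (a1 * α / a2, -α) := by
  simp only [IsStableEquilibrium, jacobian2_heliumField, Matrix.trace_fin_two_of,
    Matrix.det_fin_two_of, Prod.fst_zero, Prod.snd_zero]
  refine ⟨?_, ?_, ?_⟩
  · simp only [heliumField, Prod.ext_iff, Prod.fst_zero, Prod.snd_zero]
    constructor <;> field_simp
    · ring
    · linear_combination α * hαroot
  · have : -(a1 * α) + 2 * b2 * α - 3 * b3 * α ^ 2 < 0 := by
      nlinarith [mul_pos ha1 hα, mul_pos hb3 (mul_pos hα hα)]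
    convert this using 1
    field_simp
    ring
  · have : 0 < a1 * α ^ 2 * (2 * b3 * α - b2) := by
      have : 0 < 2 * b3 * α - b2 := by nlinarith [mul_pos hb3 hα]
      positivity
    convert this using 1
    field_simp
    linear_combination (a1 * α) * hαroot

end Helium

/-- for each of the equilibria Z1 = (0, -b2/b3), Z2 = (a1·α/a2, -α) of the
unperturbed system (λ1 = λ2 = 0), there is a continuous branch ζ(λ1, λ2) of equilibria of
the perturbed system (8.207), defined for |λ1|, |λ2| < ε, passing through Zᵢ at (0,0),
at which the Jacobian has negative trace and positive determinant (so both eigenvalues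
have negative real part). -/
theorem perturbed_stable_equilibria (a1 a2 b1 b2 b3 α : ℝ)
    (ha1 : 0 < a1) (ha2 : 0 < a2) (hb1 : 0 < b1) (hb3 : 0 < b3) (hb2 : b2 < 0)
    (hα : α = (|b2| / (2 * b3)) * (Real.sqrt (1 + 4 * a1 * b1 * b3 / (a2 * b2 ^ 2)) - 1))
    (G : ℝ × ℝ → ℝ × ℝ → ℝ × ℝ)
    (hG : G = fun q p => (q.1 * p.1 - a1 * p.2 * p.1 - a2 * p.1 ^ 2,
                          q.2 * p.2 - b1 * p.1 - b2 * p.2 ^ 2 - b3 * p.2 ^ 3)) :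
    ∀ Z ∈ ({((0 : ℝ), -b2 / b3), (a1 * α / a2, -α)} : Set (ℝ × ℝ)),
      ∃ ε > (0 : ℝ), ∃ ζ : ℝ × ℝ → ℝ × ℝ,
        ContinuousOn ζ {q : ℝ × ℝ | |q.1| < ε ∧ |q.2| < ε} ∧
        ζ (0, 0) = Z ∧
        ∀ q : ℝ × ℝ, |q.1| < ε → |q.2| < ε →
          G q (ζ q) = (0, 0) ∧
          (jacobian2 (G q) (ζ q)).trace < 0 ∧
          0 < (jacobian2 (G q) (ζ q)).det := by
  obtain rfl : G = heliumField a1 a2 b1 b2 b3 := hG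
  obtain ⟨hα₀, hαroot⟩ := pos_root_of_eq_sqrt ha1 ha2 hb1 hb3 hb2 hα
  rintro Z (rfl | rfl)
  · exact (isStableEquilibrium_heliumField_solid ha1 hb3 hb2).exists_branch_on_square
      (contDiff_heliumField ..)
  · exact (isStableEquilibrium_heliumField_superfluid ha1 ha2 hb3 hb2 hα₀ hαroot
      ).exists_branch_on_square (contDiff_heliumField ..)
end
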